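/- For M ≥ 2, for all sufficiently large n, the number of period-n points of the Dyck shift with H_n > 0 satisfies (1/3)(M+1)^n ≤ #Per_{α,n}(σ) < (M+1)^n. -/

import Mathlib

/-- The alphabet of `M` bracket pairs: `Sum.inl k` is the opening bracket `α_k`,
`Sum.inr k` is the closing bracket `β_k`. -/
abbrev DyckSym (M : ℕ) := Fin M ⊕ Fin M

/-- One step of left-to-right reduction in the Dyck monoid with zero:
the accumulator is `none` (the zero element) or the reduced word so far. -/
def dyckRedStep (M : ℕ) : Option (List (DyckSym M)) → DyckSym M → Option (List (DyckSym M))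
  | none, _ => none
  | some l, Sum.inl k => some (l ++ [Sum.inl k])
  | some l, Sum.inr k =>
      match l.getLast? with
      | some (Sum.inl j) => if j = k then some l.dropLast else none
      | _ => some (l ++ [Sum.inr k])

/-- Reduction of a finite word in the Dyck monoid with zero; `none` represents `0`. -/
def dyckRed (M : ℕ) (w : List (DyckSym M)) : Option (List (DyckSym M)) :=
  w.foldl (dyckRedStep M) (some [])

/-- The finite subword `ω_j ⋯ ω_k` of a bi-infinite sequence. -/
def dyckSubword (M : ℕ) (ω : ℤ → DyckSym M) (j k : ℤ) : List (DyckSym M) :=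
  (List.range (k - j + 1).toNat).map fun i => ω (j + i)

/-- The Dyck shift on `2M` symbols. -/
def dyckShiftSet (M : ℕ) : Set (ℤ → DyckSym M) :=
  {ω | ∀ j k : ℤ, j < k → dyckRed M (dyckSubword M ω j k) ≠ none}

/-- The left shift map. -/
def dyckShiftMap (M : ℕ) (ω : ℤ → DyckSym M) : ℤ → DyckSym M := fun i => ω (i + 1)

/-- `H_n(ω)`: excess of opening over closing brackets among `ω_0 ⋯ ω_{n-1}`. -/
def dyckH (M : ℕ) (n : ℕ) (ω : ℤ → DyckSym M) : ℤ :=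
  ∑ j ∈ Finset.range n, (if (ω (j : ℤ)).isLeft then (1 : ℤ) else -1)

/-- Periodic points of period `n` of the Dyck shift. -/
def dyckPer (M n : ℕ) : Set (ℤ → DyckSym M) :=
  {ω | ω ∈ dyckShiftSet M ∧ (dyckShiftMap M)^[n] ω = ω}

/-- Period-`n` points with `H_n > 0` (1-unstable / negative multiplier). -/
def dyckPerA (M n : ℕ) : Set (ℤ → DyckSym M) :=
  {ω | ω ∈ dyckPer M n ∧ 0 < dyckH M n ω}

/-- Period-`n` points with `H_n < 0`. -/
def dyckPerB (M n : ℕ) : Set (ℤ → DyckSym M) :=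
  {ω | ω ∈ dyckPer M n ∧ dyckH M n ω < 0}

/-!
A bi-infinite bracket sequence lies in the Dyck shift exactly when every closing bracket carries
the type of the opening bracket it matches, the matching being read off the height profile. For a
period-`n` point with `H_n > 0` the height drifts upwards, so every closing bracket has a partner
and its type is forced. Forgetting the types of the closing brackets therefore identifies
`Per_{α,n}` with the words of length `n` over `α_1, …, α_M, β` with more `α`s than `β`s. Sorting
these words by their set `s` of opening positions (weight `M ^ #s`), complementation of `s` shows
that there are at most as many words with fewer `α`s than `β`s, so
`2 #Per_{α,n} ≥ (M + 1) ^ n - C_n`, where `C_n ≤ (4M) ^ (n / 2)` counts the balanced words. As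
`4M < (M + 1) ^ 2` for `M ≥ 2`, eventually `3 C_n ≤ (M + 1) ^ n`. The word `β ^ n` is never
counted, whence the strict upper bound.
-/

namespace DyckShift

open Finset Function Filter Sum

section Height

variable (P : ℤ → Bool)

def heightStep (b : Bool) : ℤ := if b then 1 else -1

noncomputable def height (i : ℤ) : ℤ :=
  ∑ t ∈ Ico 0 i, heightStep (P t) - ∑ t ∈ Ico i 0, heightStep (P t)

@[simp] lemma height_zero : height P 0 = 0 := by simp [height]

lemma height_succ (i : ℤ) : height P (i + 1) = height P i + heightStep (P i) := by
  unfold height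
  rcases le_or_gt 0 i with hi | hi
  · rw [← insert_Ico_right_eq_Ico_add_one hi, sum_insert (by simp),
      Ico_eq_empty_of_le (show 0 ≤ i + 1 by omega), Ico_eq_empty_of_le hi]
    ring
  · rw [← insert_Ico_add_one_left_eq_Ico hi, sum_insert (by simp),
      Ico_eq_empty_of_le (show i + 1 ≤ 0 by omega), Ico_eq_empty_of_le hi.le]
    ring

variable {P}

lemma height_succ_of_true {i : ℤ} (h : P i = true) : height P (i + 1) = height P i + 1 := by
  simp [height_succ, h, heightStep]

lemma height_succ_of_false {i : ℤ} (h : P i = false) : height P (i + 1) = height P i - 1 := by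
  simp [height_succ, h, heightStep, sub_eq_add_neg]

lemma height_succ_eq_or (i : ℤ) :
    height P (i + 1) = height P i + 1 ∨ height P (i + 1) = height P i - 1 := by
  cases h : P i
  · exact .inr (height_succ_of_false h)
  · exact .inl (height_succ_of_true h)

lemma eq_true_of_height_le {i : ℤ} (h : height P i ≤ height P (i + 1)) : P i = true := by
  cases hP : P i
  · have := height_succ_of_false hP; omega
  · rfl

lemma eq_false_of_height_le {i : ℤ} (h : height P (i + 1) ≤ height P i) : P i = false := by
  cases hP : P i
  · rfl
  · have := height_succ_of_true hP; omega

lemma height_add_of_periodic {c : ℤ} (hP : Periodic P c) (i : ℤ) :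
    height P (i + c) = height P i + height P c := by
  induction i using Int.induction_on with
  | zero => simp
  | succ i ih =>
    rw [show (i : ℤ) + 1 + c = i + c + 1 by ring, height_succ, height_succ, ih, hP]
    ring
  | pred i ih =>
    have h₁ := height_succ P (-(i : ℤ) - 1 + c)
    have h₂ := height_succ P (-(i : ℤ) - 1)
    rw [show -(i : ℤ) - 1 + c + 1 = -i + c by ring, hP] at h₁
    rw [show -(i : ℤ) - 1 + 1 = -i by ring] at h₂
    linarith

/-- A discrete intermediate value property. -/
lemma lt_height_of_forall_ne {a b c : ℤ} (ha : c < height P a)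
    (hne : ∀ z, a ≤ z → z ≤ b → height P z ≠ c) :
    ∀ z, a ≤ z → z ≤ b → c < height P z := by
  intro z haz hzb
  induction z, haz using Int.leInduction with
  | base => exact ha
  | succ z haz ih =>
    have h₁ := ih (by omega)
    have h₂ := hne (z + 1) (by omega) hzb
    rcases height_succ_eq_or (P := P) z with h | h <;> omega

end Height

/-- The closing bracket at `i` closes the opening bracket at `q`: after `i` the height is back
at its value before `q`, and strictly in between it stays above that value. -/
def IsMatch (P : ℤ → Bool) (i q : ℤ) : Prop :=
  q < i ∧ height P q = height P (i + 1) ∧ ∀ z, q < z → z ≤ i → height P q < height P z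

namespace IsMatch

variable {P : ℤ → Bool} {i q : ℤ}

lemma closing (h : IsMatch P i q) : P i = false :=
  eq_false_of_height_le (by linarith [h.2.2 i h.1 le_rfl, h.2.1])

lemma opening (h : IsMatch P i q) : P q = true :=
  eq_true_of_height_le (h.2.2 (q + 1) (by omega) (by have := h.1; omega)).le

lemma unique {q' : ℤ} (h : IsMatch P i q) (h' : IsMatch P i q') : q = q' := by
  by_contra hne
  rcases lt_or_gt_of_ne hne with hlt | hlt
  · linarith [h.2.2 q' hlt h'.1.le, h.2.1, h'.2.1]
  · linarith [h'.2.2 q hlt h.1.le, h.2.1, h'.2.1]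

lemma add_period {c : ℤ} (hP : Periodic P c) (h : IsMatch P i q) : IsMatch P (i + c) (q + c) := by
  have hshift := height_add_of_periodic hP
  refine ⟨by linarith [h.1], ?_, fun z h₁ h₂ => ?_⟩
  · rw [show i + c + 1 = i + 1 + c by ring, hshift, hshift, h.2.1]
  · have := h.2.2 (z - c) (by omega) (by omega)
    have := hshift (z - c)
    rw [sub_add_cancel] at this
    rw [hshift]
    omega

end IsMatch

/-- The partner of an opening bracket is the position just before the height first returns to
its level. -/
lemma exists_isMatch_of_height_eq {P : ℤ → Bool} {j e : ℤ} (hj : P j = true)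
    (hret : ∃ s, j < s ∧ s ≤ e ∧ height P s = height P j) : ∃ i < e, IsMatch P i j := by
  obtain ⟨s, ⟨hjs, hse, hs⟩, hleast⟩ := Int.exists_least_of_bdd ⟨j, fun s hs => hs.1.le⟩ hret
  have hup := height_succ_of_true hj
  have hjs : j + 1 < s := lt_of_le_of_ne hjs (by rintro rfl; omega)
  refine ⟨s - 1, by omega, by omega, by rw [sub_add_cancel, hs], fun z h₁ h₂ => ?_⟩
  refine lt_height_of_forall_ne (a := j + 1) (b := s - 1) (by omega) (fun z h₁ h₂ heq => ?_) z
    (by omega) h₂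
  have := hleast z ⟨by omega, by omega, heq⟩
  omega

/-- The partner is the last position before `i` at which the height is at most its value after
`i`; the positive drift guarantees that there are such positions. -/
lemma exists_isMatch {P : ℤ → Bool} {n : ℕ} (hP : Periodic P n) (hd : 0 < height P n) {i : ℤ}
    (hi : P i = false) : ∃ q, IsMatch P i q := by
  have hn : (1 : ℤ) ≤ n := by
    rcases Nat.eq_zero_or_pos n with rfl | hn
    · simp at hd
    · exact_mod_cast hn
  have hdown := height_succ_of_false hi
  have hback : height P (i + 1 - n) < height P (i + 1) := by
    have := height_add_of_periodic hP (i + 1 - n)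
    rw [sub_add_cancel] at this
    omega
  obtain ⟨q, ⟨hqi, hq⟩, hmax⟩ := Int.exists_greatest_of_bdd
    (P := fun z => z ≤ i ∧ height P z ≤ height P (i + 1)) ⟨i, fun z hz => hz.1⟩
    ⟨i + 1 - n, by omega, hback.le⟩
  have habove : ∀ z, q < z → z ≤ i → height P (i + 1) < height P z := fun z h₁ h₂ => by
    by_contra! h
    have := hmax z ⟨h₂, h⟩
    omega
  have hqi : q < i := lt_of_le_of_ne hqi (by rintro rfl; omega)
  have hq' : height P q = height P (i + 1) := by
    have := habove (q + 1) (by omega) (by omega)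
    rcases height_succ_eq_or (P := P) q with h | h <;> omega
  exact ⟨q, hqi, hq', fun z h₁ h₂ => hq' ▸ habove z h₁ h₂⟩

section Shift

variable {M : ℕ}

lemma iterate_dyckShiftMap_apply (ω : ℤ → DyckSym M) (n : ℕ) (i : ℤ) :
    (dyckShiftMap M)^[n] ω i = ω (i + n) := by
  induction n generalizing ω with
  | zero => simp
  | succ n ih =>
    rw [Function.iterate_succ_apply, ih]
    simp only [dyckShiftMap, Nat.cast_succ, add_assoc]

lemma iterate_dyckShiftMap_eq_self_iff {ω : ℤ → DyckSym M} {n : ℕ} :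
    (dyckShiftMap M)^[n] ω = ω ↔ Periodic ω n := by
  simp only [funext_iff, iterate_dyckShiftMap_apply, Periodic]

def shape (ω : ℤ → DyckSym M) : ℤ → Bool := fun i => (ω i).isLeft

lemma dyckH_eq_height (n : ℕ) (ω : ℤ → DyckSym M) : dyckH M n ω = height (shape ω) n := by
  induction n with
  | zero => simp [dyckH]
  | succ n ih =>
    rw [dyckH, sum_range_succ, ← dyckH, ih, Nat.cast_succ, height_succ]
    rfl

end Shift

section Window

variable {α : Type*} (ω : ℤ → α)

def window (j : ℤ) (len : ℕ) : List α := (List.range len).map fun t : ℕ => ω (j + t)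

@[simp] lemma window_zero (j : ℤ) : window ω j 0 = [] := rfl

lemma window_succ (j : ℤ) (len : ℕ) : window ω j (len + 1) = ω j :: window ω (j + 1) len := by
  simp only [window, List.range_succ_eq_map, List.map_cons, List.map_map]
  congr 2
  · simp
  · ext t; simp [add_assoc, add_comm (1 : ℤ)]

lemma window_add (j : ℤ) (a b : ℕ) : window ω j (a + b) = window ω j a ++ window ω (j + a) b := by
  simp only [window, List.range_add, List.map_append, List.map_map]
  congr 2
  ext t; simp [add_assoc]

lemma window_eq_append_cons {j : ℤ} {a len : ℕ} (h : a < len) :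
    window ω j len = window ω j a ++ ω (j + a) :: window ω (j + a + 1) (len - a - 1) := by
  rw [← window_succ, ← window_add]
  congr 1
  omega

lemma dyckSubword_eq_window {M : ℕ} (ω : ℤ → DyckSym M) (j k : ℤ) :
    dyckSubword M ω j k = window ω j (k - j + 1).toNat := by
  simp [dyckSubword, window, ← List.map_eq_flatMap, List.map_map, Function.comp_def]

end Window

section Reduction

variable {M : ℕ}

@[simp] lemma dyckRedStep_none (x : DyckSym M) : dyckRedStep M none x = none := by
  cases x <;> rfl

@[simp] lemma foldl_dyckRedStep_none (w : List (DyckSym M)) :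
    w.foldl (dyckRedStep M) none = none := by
  induction w with
  | nil => rfl
  | cons x w ih => simpa using ih

lemma dyckRedStep_inl (l : List (DyckSym M)) (a : Fin M) :
    dyckRedStep M (some l) (inl a) = some (l ++ [inl a]) := rfl

lemma dyckRedStep_concat_inl_inr (l : List (DyckSym M)) (a b : Fin M) :
    dyckRedStep M (some (l ++ [inl a])) (inr b) = if a = b then some l else none := by
  simp [dyckRedStep]

lemma dyckRedStep_cons_inr (l : List (DyckSym M)) (b : Fin M) (x : DyckSym M) :
    dyckRedStep M (some (inr b :: l)) x = (dyckRedStep M (some l) x).map (inr b :: ·) := by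
  rcases x with a | c
  · rfl
  · rcases List.eq_nil_or_concat' l with rfl | ⟨l, y, rfl⟩
    · rfl
    · rw [← List.cons_append]
      rcases y with a | a
      · simp only [dyckRedStep, List.getLast?_concat, List.dropLast_concat]
        split_ifs <;> rfl
      · simp only [dyckRedStep, List.getLast?_concat]
        rfl

lemma foldl_dyckRedStep_cons_inr (w l : List (DyckSym M)) (b : Fin M) :
    w.foldl (dyckRedStep M) (some (inr b :: l)) =
      (w.foldl (dyckRedStep M) (some l)).map (inr b :: ·) := by
  induction w generalizing l with
  | nil => rfl
  | cons x w ih =>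
    simp only [List.foldl_cons, dyckRedStep_cons_inr]
    cases dyckRedStep M (some l) x with
    | none => simp
    | some l' => exact ih l'

end Reduction

section Language

variable {M : ℕ} {ω : ℤ → DyckSym M}

def Matched (ω : ℤ → DyckSym M) : Prop :=
  ∀ ⦃i q : ℤ⦄ ⦃a : Fin M⦄, IsMatch (shape ω) i q → ω q = inl a → ω i = inr a

lemma exists_eq_inr_of_shape {i : ℤ} (h : shape ω i = false) : ∃ b, ω i = inr b :=
  Sum.isRight_iff.1 (by simpa [shape] using h)

lemma foldl_window_of_le_height (len : ℕ) : ∀ (j : ℤ) (l m : List (DyckSym M)),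
    (∀ x ∈ m, x.isLeft) →
    (∀ s, j ≤ s → s ≤ j + len → height (shape ω) j ≤ height (shape ω) s + m.length) →
    (window ω j len).foldl (dyckRedStep M) (some (l ++ m)) ≠ none →
    ∃ m' : List (DyckSym M),
      (m'.length : ℤ) + height (shape ω) j = m.length + height (shape ω) (j + len) ∧
      (window ω j len).foldl (dyckRedStep M) (some (l ++ m)) = some (l ++ m') := by
  induction len with
  | zero => exact fun j l m _ _ _ => ⟨m, by simp, rfl⟩
  | succ len ih =>
    intro j l m hm hmin hne
    rw [window_succ, List.foldl_cons] at hne ⊢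
    rcases hx : ω j with a | b <;> rw [hx] at hne
    · have hup := height_succ_of_true (P := shape ω) (i := j) (by simp [shape, hx])
      rw [dyckRedStep_inl, List.append_assoc] at hne ⊢
      obtain ⟨m', hlen, hred⟩ := ih (j + 1) l (m ++ [inl a])
        (by simpa [or_imp, forall_and] using hm)
        (fun s h₁ h₂ => by have := hmin s (by omega) (by push_cast at h₂ ⊢; omega); simp; omega) hne
      refine ⟨m', ?_, hred⟩
      simp only [List.length_append, List.length_singleton, Nat.cast_add, Nat.cast_one] at hlen
      rw [show j + 1 + (len : ℤ) = j + (len + 1 : ℕ) by push_cast; ring] at hlen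
      omega
    · have hdown := height_succ_of_false (P := shape ω) (i := j) (by simp [shape, hx])
      obtain ⟨m₀, y, rfl⟩ := (List.eq_nil_or_concat' m).resolve_left (by
        rintro rfl
        have := hmin (j + 1) (by omega) (by push_cast; omega)
        simp at this
        omega)
      obtain ⟨c, rfl⟩ := Sum.isLeft_iff.1 (hm y (by simp))
      rw [← List.append_assoc, dyckRedStep_concat_inl_inr] at hne ⊢
      split_ifs at hne ⊢
      · obtain ⟨m', hlen, hred⟩ := ih (j + 1) l m₀ (fun x hx => hm x (by simp [hx]))
          (fun s h₁ h₂ => by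
            have := hmin s (by omega) (by push_cast at h₂ ⊢; omega)
            simp at this
            omega) hne
        refine ⟨m', ?_, hred⟩
        rw [show j + 1 + (len : ℤ) = j + (len + 1 : ℕ) by push_cast; ring] at hlen
        simp only [List.length_append, List.length_singleton, Nat.cast_add, Nat.cast_one] at hlen ⊢
        omega
      · simp at hne

/-- The inside of the pair brings the stack back to `[inl a]`, which the closing bracket must then
cancel. -/
lemma matched_of_mem_dyckShiftSet (hω : ω ∈ dyckShiftSet M) : Matched ω := by
  intro i q a hm ha
  obtain ⟨b, hb⟩ := exists_eq_inr_of_shape hm.closing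
  obtain ⟨k, rfl⟩ : ∃ k : ℕ, i = q + 1 + k := ⟨(i - q - 1).toNat, by have := hm.1; omega⟩
  have hne := hω q _ hm.1
  rw [dyckRed, dyckSubword_eq_window, show (q + 1 + k - q + 1).toNat = k + 1 + 1 by omega,
    window_succ, window_eq_append_cons _ (show k < k + 1 by omega), show k + 1 - k - 1 = 0 by omega]
    at hne
  simp only [List.foldl_cons, List.foldl_append, ha, dyckRedStep_inl, List.nil_append, hb,
    window_zero, List.foldl_nil] at hne
  obtain ⟨m', hlen, hred⟩ := foldl_window_of_le_height k (q + 1) [inl a] [] (by simp)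
    (fun s h₁ h₂ => by
      have := hm.2.2 s (by omega) h₂
      rw [height_succ_of_true hm.opening]
      simp
      omega)
    (by simpa using fun h => hne (by simp [h]))
  have hclose := height_succ_of_false hm.closing
  have hopen := height_succ_of_true hm.opening
  obtain rfl : m' = [] := List.eq_nil_of_length_eq_zero (by have := hm.2.1; simp at hlen; omega)
  simp only [List.append_nil] at hred
  rw [hred, ← List.nil_append [inl a], dyckRedStep_concat_inl_inr] at hne
  split_ifs at hne with hab
  · rw [hb, hab]
  · exact absurd rfl hne

lemma foldl_window_of_matched (hω : Matched ω) (len : ℕ) : ∀ j : ℤ,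
    (∀ s, j ≤ s → s ≤ j + len → height (shape ω) j ≤ height (shape ω) s) →
    ∀ l : List (DyckSym M), ∃ o : List (DyckSym M),
      (o.length : ℤ) + height (shape ω) j = height (shape ω) (j + len) ∧
      (window ω j len).foldl (dyckRedStep M) (some l) = some (l ++ o) := by
  induction len using Nat.strong_induction_on with
  | _ len ih =>
  intro j hmin l
  rcases Nat.eq_zero_or_pos len with rfl | hlen
  · exact ⟨[], by simp, by simp⟩
  have hj : shape ω j = true := eq_true_of_height_le (hmin (j + 1) (by omega) (by omega))
  obtain ⟨a, ha⟩ := Sum.isLeft_iff.1 hj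
  have hup := height_succ_of_true hj
  by_cases hret : ∃ s, j < s ∧ s ≤ j + len ∧ height (shape ω) s = height (shape ω) j
  · obtain ⟨i, hi, hmatch⟩ := exists_isMatch_of_height_eq hj hret
    obtain ⟨k, rfl⟩ : ∃ k : ℕ, i = j + 1 + k := ⟨(i - j - 1).toNat, by have := hmatch.1; omega⟩
    have hs := hmatch.2.1
    have hclose := height_succ_of_false hmatch.closing
    obtain ⟨o₁, ho₁, hred₁⟩ := ih k (by omega) (j + 1)
      (fun z h₁ h₂ => by have := hmatch.2.2 z (by omega) h₂; omega) (l ++ [inl a])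
    obtain ⟨o₂, ho₂, hred₂⟩ := ih (len - 1 - k - 1) (by omega) (j + 1 + k + 1)
      (fun z h₁ h₂ => by have := hmin z (by omega) (by omega); omega) l
    obtain rfl : o₁ = [] := List.eq_nil_of_length_eq_zero (by omega)
    refine ⟨o₂, ?_, ?_⟩
    · rw [show j + 1 + k + 1 + ((len - 1 - k - 1 : ℕ) : ℤ) = j + len by omega] at ho₂
      omega
    · rw [show len = len - 1 + 1 by omega, window_succ,
        window_eq_append_cons _ (show k < len - 1 by omega), List.foldl_cons, ha, dyckRedStep_inl,
        List.foldl_append, hred₁, List.append_nil, List.foldl_cons, hω hmatch ha,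
        dyckRedStep_concat_inl_inr, if_pos rfl,
        hred₂]
  · push Not at hret
    have habove := lt_height_of_forall_ne (a := j + 1) (b := j + len) (by omega)
      (fun z h₁ h₂ => hret z (by omega) h₂)
    obtain ⟨o, ho, hred⟩ := ih (len - 1) (by omega) (j + 1)
      (fun z h₁ h₂ => by have := habove z h₁ (by omega); omega) (l ++ [inl a])
    refine ⟨inl a :: o, ?_, ?_⟩
    · rw [show j + 1 + ((len - 1 : ℕ) : ℤ) = j + len by omega] at ho
      simp only [List.length_cons, Nat.cast_add, Nat.cast_one]
      omega
    · rw [show len = len - 1 + 1 by omega, window_succ, List.foldl_cons, ha, dyckRedStep_inl, hred]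
      simp

/-- Cut the window at its first closing bracket without partner inside the window: the part before
it reduces to nothing, and the bracket itself stays at the bottom of the stack. -/
lemma foldl_window_ne_none (hω : Matched ω) (len : ℕ) (j : ℤ) :
    (window ω j len).foldl (dyckRedStep M) (some []) ≠ none := by
  induction len using Nat.strong_induction_on generalizing j with
  | _ len ih =>
  by_cases hdip : ∃ s, j ≤ s ∧ s ≤ j + len ∧ height (shape ω) s < height (shape ω) j
  · obtain ⟨s, ⟨hjs, hslen, hs⟩, hleast⟩ := Int.exists_least_of_bdd ⟨j, fun s hs => hs.1⟩ hdip
    obtain ⟨k, rfl⟩ : ∃ k : ℕ, s = j + k + 1 := ⟨(s - j - 1).toNat, by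
      have : s ≠ j := by rintro rfl; omega
      omega⟩
    have hk : height (shape ω) (j + k) = height (shape ω) j := by
      have := hleast (j + k)
      rcases height_succ_eq_or (P := shape ω) (j + k) with h | h <;> omega
    obtain ⟨b, hb⟩ :=
      exists_eq_inr_of_shape (eq_false_of_height_le (P := shape ω) (i := j + k) (by omega))
    obtain ⟨o, ho, hred⟩ := foldl_window_of_matched hω k j
      (fun z h₁ h₂ => by have := hleast z; omega) []
    obtain rfl : o = [] := List.eq_nil_of_length_eq_zero (by omega)
    rw [window_eq_append_cons _ (show k < len by omega), List.foldl_append, hred, List.foldl_cons,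
      hb]
    change (window ω _ _).foldl _ (some (inr b :: [])) ≠ none
    rw [foldl_dyckRedStep_cons_inr]
    simpa using ih _ (by omega) _
  · push Not at hdip
    obtain ⟨o, -, hred⟩ := foldl_window_of_matched hω len j hdip []
    simp [hred]

theorem mem_dyckShiftSet_iff : ω ∈ dyckShiftSet M ↔ Matched ω := by
  refine ⟨matched_of_mem_dyckShiftSet, fun hω j k _ => ?_⟩
  rw [dyckRed, dyckSubword_eq_window]
  exact foldl_window_ne_none hω _ _

end Language

section Construction

variable {M : ℕ} [NeZero M]

/-- The type of the partner of the closing bracket at `i`, or `0` if it has none. -/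
noncomputable def closingType (u : ℤ → Option (Fin M)) (i : ℤ) : Fin M :=
  open Classical in
  if h : ∃ q, IsMatch (fun z => (u z).isSome) i q then (u h.choose).getD 0 else 0

lemma closingType_of_isMatch {u : ℤ → Option (Fin M)} {i q : ℤ}
    (h : IsMatch (fun z => (u z).isSome) i q) : closingType u i = (u q).getD 0 := by
  have hex : ∃ q, IsMatch (fun z => (u z).isSome) i q := ⟨q, h⟩
  rw [closingType, dif_pos hex, hex.choose_spec.unique h]

lemma closingType_add_of_periodic {u : ℤ → Option (Fin M)} {c : ℤ} (hu : Periodic u c) (i : ℤ) :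
    closingType u (i + c) = closingType u i := by
  have hP : Periodic (fun z => (u z).isSome) c := fun z => by simp only [hu z]
  by_cases hex : ∃ q, IsMatch (fun z => (u z).isSome) i q
  · obtain ⟨q, hq⟩ := hex
    rw [closingType_of_isMatch hq, closingType_of_isMatch (hq.add_period hP), hu]
  · have hex' : ¬ ∃ q, IsMatch (fun z => (u z).isSome) (i + c) q := fun ⟨q, hq⟩ =>
      hex ⟨q + -c, by simpa using hq.add_period hP.neg⟩
    rw [closingType, closingType, dif_neg hex, dif_neg hex']

/-- Opening brackets as prescribed by `u`, each closing bracket of the type it has to close. -/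
noncomputable def ofOpenings (u : ℤ → Option (Fin M)) (i : ℤ) : DyckSym M :=
  (u i).elim (inr (closingType u i)) inl

variable {u : ℤ → Option (Fin M)}

@[simp] lemma getLeft?_ofOpenings (i : ℤ) : (ofOpenings u i).getLeft? = u i := by
  cases h : u i <;> simp [ofOpenings, h]

lemma shape_ofOpenings : shape (ofOpenings u) = fun i => (u i).isSome := by
  funext i
  cases h : u i <;> simp [shape, ofOpenings, h]

lemma matched_ofOpenings : Matched (ofOpenings u) := by
  intro i q a hm ha
  rw [shape_ofOpenings] at hm
  have hq : u q = some a := by rw [← getLeft?_ofOpenings (u := u), ha]; rfl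
  have hi : u i = none := by simpa using hm.closing
  simp [ofOpenings, hi, closingType_of_isMatch hm, hq]

lemma periodic_ofOpenings {c : ℤ} (hu : Periodic u c) : Periodic (ofOpenings u) c := fun i => by
  simp [ofOpenings, hu i, closingType_add_of_periodic hu]

end Construction

section Counting

variable {ι α : Type*} [Fintype ι] [DecidableEq ι] [Fintype α]

def someSupport (v : ι → Option α) : Finset ι := univ.filter fun t => (v t).isSome

lemma card_filter_someSupport_eq (s : Finset ι) :
    #{v : ι → Option α | someSupport v = s} = Fintype.card α ^ #s := by
  rw [← Fintype.card_subtype, ← Fintype.card_coe s, ← Fintype.card_fun]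
  refine Fintype.card_congr
    { toFun := fun v t => (v.1 t).get (by
        have h : (t : ι) ∈ someSupport v.1 := by rw [v.2]; exact t.2
        simpa [someSupport] using h)
      invFun := fun g => ⟨fun t => if h : t ∈ s then some (g ⟨t, h⟩) else none, by
        ext t; by_cases h : t ∈ s <;> simp [someSupport, h]⟩
      left_inv := fun v => ?_
      right_inv := fun g => by ext; simp }
  ext t : 2
  by_cases h : t ∈ s
  · simp [h]
  · have : v.1 t = none := by
      rw [← v.2] at h
      simpa [someSupport] using h
    simp [h, this]

lemma card_filter_someSupport (p : Finset ι → Prop) [DecidablePred p] :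
    #{v : ι → Option α | p (someSupport v)} = ∑ s with p s, Fintype.card α ^ #s := by
  rw [card_eq_sum_card_fiberwise (f := someSupport) (t := univ.filter p)
    (fun v hv => by simpa using hv)]
  refine sum_congr rfl fun s hs => ?_
  rw [← card_filter_someSupport_eq s, filter_filter]
  congr 1
  ext v
  simp only [mem_filter, mem_univ, true_and, and_iff_right_iff_imp]
  rintro rfl
  simpa using hs

end Counting

section Period

variable {M n : ℕ}

open scoped Fin.IntCast

def openings (n : ℕ) (ω : ℤ → DyckSym M) : Fin n → Option (Fin M) := fun t => (ω t).getLeft?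

lemma dyckH_eq_card_someSupport (ω : ℤ → DyckSym M) :
    dyckH M n ω = 2 * #(someSupport (openings n ω)) - n := by
  rw [dyckH, ← Fin.sum_univ_eq_sum_range (fun j => if (ω j).isLeft then (1 : ℤ) else -1), sum_ite,
    sum_const, sum_const]
  have := card_filter_add_card_filter_not (s := (univ : Finset (Fin n))) (fun t => (ω t).isLeft)
  simp [someSupport, openings] at this ⊢
  omega

lemma apply_eq_apply_val_intCast [NeZero n] {ω : ℤ → DyckSym M} (hω : Periodic ω n) (i : ℤ) :
    ω i = ω ((i : Fin n) : ℕ) := by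
  rw [Fin.val_intCast, Int.toNat_of_nonneg (Int.emod_nonneg _ (by exact_mod_cast NeZero.ne n)),
    Int.emod_def, mul_comm]
  exact (hω.sub_int_mul_eq _).symm

lemma eq_of_getLeft?_eq {ω ω' : ℤ → DyckSym M} (hω : Matched ω) (hω' : Matched ω')
    (hex : ∀ i, shape ω i = false → ∃ q, IsMatch (shape ω) i q)
    (h : ∀ i, (ω i).getLeft? = (ω' i).getLeft?) : ω = ω' := by
  have hshape : shape ω = shape ω' := funext fun i => by
    simp only [shape]
    rw [Bool.eq_iff_iff, ← isSome_getLeft?_iff_isLeft, ← isSome_getLeft?_iff_isLeft, h]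
  have hopen : ∀ i a, ω i = inl a → ω' i = inl a := fun i a hi =>
    getLeft?_eq_some_iff.1 (by rw [← h, hi]; rfl)
  funext i
  rcases hi : ω i with a | b
  · exact (hopen i a hi).symm
  · obtain ⟨q, hq⟩ := hex i (by simp [shape, hi])
    obtain ⟨a, ha⟩ := isLeft_iff.1 hq.opening
    rw [← hi, hω hq ha, hω' (hshape ▸ hq) (hopen q a ha)]

lemma periodic_of_mem_dyckPerA {ω : ℤ → DyckSym M} (hω : ω ∈ dyckPerA M n) : Periodic ω n :=
  iterate_dyckShiftMap_eq_self_iff.1 hω.1.2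

lemma injOn_openings [NeZero n] : Set.InjOn (openings n) (dyckPerA M n) := by
  intro ω hω ω' hω' heq
  have hper := periodic_of_mem_dyckPerA hω
  have hdrift : 0 < height (shape ω) n := dyckH_eq_height n ω ▸ hω.2
  refine eq_of_getLeft?_eq (mem_dyckShiftSet_iff.1 hω.1.1) (mem_dyckShiftSet_iff.1 hω'.1.1)
    (fun i hi => exists_isMatch (fun z => by simp [shape, hper z]) hdrift hi) (fun i => ?_)
  rw [apply_eq_apply_val_intCast hper, apply_eq_apply_val_intCast (periodic_of_mem_dyckPerA hω')]
  exact congrFun heq _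

/-- Forgetting the types of the closing brackets is a bijection onto the words with more opening
than closing brackets: by the positive drift every closing bracket has a partner, whose type it
must carry. -/
theorem ncard_dyckPerA [NeZero M] [NeZero n] :
    (dyckPerA M n).ncard = #{v : Fin n → Option (Fin M) | n < 2 * #(someSupport v)} := by
  rw [← Set.ncard_coe_finset, ← injOn_openings.ncard_image]
  congr 1
  ext v
  simp only [Set.mem_image, coe_filter, mem_univ, true_and, Set.mem_ofPred_eq]
  constructor
  · rintro ⟨ω, hω, rfl⟩
    have := hω.2
    rw [dyckH_eq_card_someSupport] at this
    omega
  · intro hv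
    let u : ℤ → Option (Fin M) := fun i => v i
    have hu : Periodic u n := fun i => by
      simp only [u]
      congr 1
      ext
      simp
    have hv' : openings n (ofOpenings u) = v := funext fun t => by
      simp only [openings, getLeft?_ofOpenings, u]
      congr 1
      ext
      rw [Fin.val_intCast, Int.emod_eq_of_lt (by omega) (by omega), Int.toNat_natCast]
    refine ⟨ofOpenings u, ⟨⟨mem_dyckShiftSet_iff.2 matched_ofOpenings,
      iterate_dyckShiftMap_eq_self_iff.2 (periodic_ofOpenings hu)⟩, ?_⟩, hv'⟩
    rw [dyckH_eq_card_someSupport, hv']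
    omega

end Period

lemma card_filter_lt_add_one_pow (n M : ℕ) :
    #{v : Fin n → Option (Fin M) | n < 2 * #(someSupport v)} < (M + 1) ^ n := by
  calc _ < #(univ : Finset (Fin n → Option (Fin M))) :=
        card_lt_card (filter_ssubset.2 ⟨fun _ => none, mem_univ _, by simp [someSupport]⟩)
    _ = (M + 1) ^ n := by simp

/-- Complementation of the set of opening positions shows that fewer openings weigh less. -/
lemma add_one_pow_le_two_mul_card_add {M : ℕ} (hM : 0 < M) (n : ℕ) :
    (M + 1) ^ n ≤ 2 * #{v : Fin n → Option (Fin M) | n < 2 * #(someSupport v)} +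
      ∑ s : Finset (Fin n) with 2 * #s = n, M ^ #s := by
  have htotal : ∑ s : Finset (Fin n), M ^ #s = (M + 1) ^ n := by
    simpa using sum_pow_mul_eq_add_pow M 1 (univ : Finset (Fin n))
  have hsplit : ∑ s : Finset (Fin n), M ^ #s = ∑ s : Finset (Fin n) with n < 2 * #s, M ^ #s +
      ∑ s : Finset (Fin n) with 2 * #s < n, M ^ #s +
      ∑ s : Finset (Fin n) with 2 * #s = n, M ^ #s := by
    simp only [sum_filter, ← sum_add_distrib]
    refine sum_congr rfl fun s _ => ?_
    split_ifs <;> omega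
  have hcompl (s : Finset (Fin n)) : #sᶜ = n - #s ∧ #s ≤ n := by
    simpa [card_compl] using card_le_univ s
  have hsymm : ∑ s : Finset (Fin n) with 2 * #s < n, M ^ #s ≤
      ∑ s : Finset (Fin n) with n < 2 * #s, M ^ #s :=
    calc _ ≤ ∑ s : Finset (Fin n) with 2 * #s < n, M ^ #sᶜ :=
          sum_le_sum fun s hs => Nat.pow_le_pow_right hM (by simp at hs; have := hcompl s; omega)
      _ = _ :=
          sum_nbij' compl compl (fun s hs => by simp at hs ⊢; have := hcompl s; omega)
            (fun s hs => by simp at hs ⊢; have := hcompl s; omega)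
            (fun s _ => compl_compl s) (fun s _ => compl_compl s) (fun _ _ => rfl)
  have hgood := card_filter_someSupport (α := Fin M) fun s : Finset (Fin n) => n < 2 * #s
  simp only [Fintype.card_fin] at hgood
  omega

lemma sum_filter_two_mul_card_eq_le (m M : ℕ) :
    ∑ s : Finset (Fin (2 * m)) with 2 * #s = 2 * m, M ^ #s ≤ (4 * M) ^ m :=
  calc _ = ∑ s : Finset (Fin (2 * m)) with 2 * #s = 2 * m, M ^ m :=
        sum_congr rfl fun s hs => by simp only [mem_filter] at hs; rw [show #s = m by omega]
    _ ≤ ∑ s : Finset (Fin (2 * m)), M ^ m := sum_le_sum_of_subset (filter_subset _ _)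
    _ = (4 * M) ^ m := by simp [Fintype.card_finset, pow_mul, mul_pow]

lemma eventually_three_mul_four_mul_pow_le {M : ℕ} (hM : 2 ≤ M) :
    ∀ᶠ m in atTop, 3 * (4 * M) ^ m ≤ (M + 1) ^ (2 * m) := by
  have hM' : (2 : ℝ) ≤ M := by exact_mod_cast hM
  have hr : 1 < ((M : ℝ) + 1) ^ 2 / (4 * M) := by
    rw [one_lt_div (by positivity)]
    nlinarith
  filter_upwards [(tendsto_pow_atTop_atTop_of_one_lt hr).eventually_ge_atTop 3] with m hm
  rw [div_pow, le_div_iff₀ (by positivity), ← pow_mul] at hm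
  exact_mod_cast hm

lemma eventually_three_mul_sum_le {M : ℕ} (hM : 2 ≤ M) :
    ∀ᶠ n in atTop, 3 * ∑ s : Finset (Fin n) with 2 * #s = n, M ^ #s ≤ (M + 1) ^ n := by
  obtain ⟨N, hN⟩ := eventually_atTop.1 (eventually_three_mul_four_mul_pow_le hM)
  filter_upwards [eventually_ge_atTop (2 * N)] with n hn
  obtain ⟨m, rfl | rfl⟩ := Nat.even_or_odd' n
  · exact (Nat.mul_le_mul_left 3 (sum_filter_two_mul_card_eq_le m M)).trans (hN m (by omega))
  · rw [filter_false_of_mem fun s _ => by omega, sum_empty]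
    omega

lemma ncard_dyckPerA_lt {M n : ℕ} [NeZero M] [NeZero n] : (dyckPerA M n).ncard < (M + 1) ^ n :=
  ncard_dyckPerA.trans_lt (card_filter_lt_add_one_pow n M)

lemma eventually_add_one_pow_le_three_mul_ncard_dyckPerA {M : ℕ} (hM : 2 ≤ M) :
    ∀ᶠ n in atTop, (M + 1) ^ n ≤ 3 * (dyckPerA M n).ncard := by
  have : NeZero M := ⟨by omega⟩
  filter_upwards [eventually_three_mul_sum_le hM, eventually_gt_atTop 0] with n hcentral hn
  have : NeZero n := ⟨hn.ne'⟩
  have := add_one_pow_le_two_mul_card_add (M := M) (by omega) n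
  rw [ncard_dyckPerA]
  omega

end DyckShift

theorem stmt4 (M : ℕ) (hM : 2 ≤ M) :
    ∃ N : ℕ, ∀ n ≥ N,
      (1 / 3 : ℝ) * ((M : ℝ) + 1) ^ n ≤ ((dyckPerA M n).ncard : ℝ) ∧
      ((dyckPerA M n).ncard : ℝ) < ((M : ℝ) + 1) ^ n := by
  have : NeZero M := ⟨by omega⟩
  obtain ⟨N, hN⟩ := Filter.eventually_atTop.1
    (DyckShift.eventually_add_one_pow_le_three_mul_ncard_dyckPerA hM)
  refine ⟨max N 1, fun n hn => ⟨?_, ?_⟩⟩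
  · have hlower := hN n (le_of_max_le_left hn)
    rw [one_div_mul_eq_div, div_le_iff₀ (by norm_num), mul_comm]
    exact_mod_cast hlower
  · have : NeZero n := ⟨by omega⟩
    exact_mod_cast DyckShift.ncard_dyckPerA_lt
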